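/- Under the Harten setup, let D = {(ρ, m, e) ∈ ℝ × ℝ^d × ℝ : ρ > 0 and (γ−1)(e − ‖m‖²/(2ρ)) > 0} and define Ŝ : D → ℝ by Ŝ(ρ, m, e) = β·ρ·(p·ρ^{−γ})^{1/(α+γ)} with p = (γ−1)(e − ‖m‖²/(2ρ)). Then Ŝ is differentiable on D and its gradient at U = (ρ, m, e) equals W evaluated at the fluid state (ρ, V, p) with V = m/ρ; that is, ∂Ŝ/∂ρ = (ρ/p)(p·ρ^{−γ})^{1/(α+γ)}·(−(α/(γ−1))·(p/ρ) − ‖V‖²/2), ∂Ŝ/∂m_i = (ρ/p)(p·ρ^{−γ})^{1/(α+γ)}·V_i for each i, and ∂Ŝ/∂e = −(ρ/p)(p·ρ^{−γ})^{1/(α+γ)}. -/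

import Mathlib

/-- Harten's entropy function `S = β·ρ·(p·ρ^(−γ))^(1/(α+γ))`. -/
noncomputable def hartenS (γ α β ρ p : ℝ) : ℝ :=
  β * ρ * (p * ρ ^ (-γ)) ^ (1 / (α + γ))

/-- Harten's entropy variables, as a vector of `EuclideanSpace ℝ (Fin (d+2))`. -/
noncomputable def hartenW (d : ℕ) (γ α ρ p : ℝ) (V : Fin d → ℝ) :
    EuclideanSpace ℝ (Fin (d + 2)) :=
  (WithLp.equiv 2 (Fin (d + 2) → ℝ)).symm fun j =>
    (ρ / p) * (p * ρ ^ (-γ)) ^ (1 / (α + γ)) *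
      (Fin.cons (α := fun _ => ℝ) (-(α / (γ - 1)) * (p / ρ) - (∑ i, V i ^ 2) / 2)
        (Fin.snoc V (-1)) j)

/-- The pressure as a function of the conservative variables `U = (ρ, m, e)`:
`p(U) = (γ−1)(e − ‖m‖²/(2ρ))`. -/
noncomputable def pOf (d : ℕ) (γ : ℝ) (U : EuclideanSpace ℝ (Fin (d + 2))) : ℝ :=
  (γ - 1) * (U (Fin.last (d + 1)) -
    (∑ i : Fin d, U (Fin.castSucc (Fin.succ i)) ^ 2) / (2 * U 0))

/-- Harten's entropy function regarded as a function `Ŝ` of the conservative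
variables `U = (ρ, m, e)`. -/
noncomputable def hartenShat (d : ℕ) (γ α β : ℝ)
    (U : EuclideanSpace ℝ (Fin (d + 2))) : ℝ :=
  hartenS γ α β (U 0) (pOf d γ U)

/-- The conservative variables `U = (ρ, m, e) ∈ ℝ^(d+2)` as a point of
`EuclideanSpace ℝ (Fin (d+2))`. -/
noncomputable def consPoint (d : ℕ) (ρ : ℝ) (m : Fin d → ℝ) (e : ℝ) :
    EuclideanSpace ℝ (Fin (d + 2)) :=
  (WithLp.equiv 2 (Fin (d + 2) → ℝ)).symm (Fin.cons (α := fun _ => ℝ) ρ (Fin.snoc m e))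

/-!
Harten's entropy is `S = β ρ s^κ` with `s = p ρ^(-γ)` and `κ = 1/(α+γ)`, so
`dS/S = dρ/ρ + κ (dp/p - γ dρ/ρ)`. In conservative variables `∇ρ = (1, 0, 0)` and
`∇p = (γ-1) (‖V‖²/2, -V, 1)`. Since `β κ (γ-1) = -1` and `β (1 - γκ) = -α/(γ-1)`, the chain rule
turns `∇Ŝ` into Harten's entropy variables `W`.
-/

open InnerProductSpace ContinuousLinearMap

section HartenChainRule

variable {E : Type*} [NormedAddCommGroup E] [NormedSpace ℝ E] {r p : E → ℝ} {r' p' : E →L[ℝ] ℝ}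
  {x : E}

theorem HasFDerivAt.hartenS (γ α β : ℝ) (hr : HasFDerivAt r r' x) (hp : HasFDerivAt p p' x)
    (hr0 : 0 < r x) (hp0 : 0 < p x) :
    HasFDerivAt (fun y => hartenS γ α β (r y) (p y))
      (hartenS γ α β (r x) (p x) •
        (((1 - γ / (α + γ)) / r x) • r' + (1 / ((α + γ) * p x)) • p')) x := by
  have hs0 : 0 < p x * r x ^ (-γ) := mul_pos hp0 (Real.rpow_pos_of_pos hr0 _)
  have hs := (hp.fun_mul (hr.rpow_const (p := -γ) (Or.inl hr0.ne'))).rpow_const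
    (p := 1 / (α + γ)) (Or.inl hs0.ne')
  have h := (hr.const_mul β).fun_mul hs
  refine h.congr_fderiv ?_
  ext w
  simp only [_root_.hartenS, add_apply, smul_apply, smul_eq_mul]
  rw [Real.rpow_sub hs0, Real.rpow_sub hr0, Real.rpow_one, Real.rpow_one]
  field_simp
  ring

end HartenChainRule

section HartenGradientChainRule

variable {F : Type*} [NormedAddCommGroup F] [InnerProductSpace ℝ F] [CompleteSpace F]
  {r p : F → ℝ} {g h x : F}

theorem HasGradientAt.hartenS (γ α β : ℝ) (hr : HasGradientAt r g x) (hp : HasGradientAt p h x)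
    (hr0 : 0 < r x) (hp0 : 0 < p x) :
    HasGradientAt (fun y => hartenS γ α β (r y) (p y))
      (hartenS γ α β (r x) (p x) •
        (((1 - γ / (α + γ)) / r x) • g + (1 / ((α + γ) * p x)) • h)) x := by
  rw [hasGradientAt_iff_hasFDerivAt] at *
  simpa using hr.hartenS γ α β hp hr0 hp0

end HartenGradientChainRule

section ConsPoint

variable {d : ℕ}

@[simp] theorem consPoint_apply_zero (ρ : ℝ) (m : Fin d → ℝ) (e : ℝ) : consPoint d ρ m e 0 = ρ :=
  rfl

@[simp] theorem consPoint_apply_last (ρ : ℝ) (m : Fin d → ℝ) (e : ℝ) :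
    consPoint d ρ m e (Fin.last (d + 1)) = e := by
  simp [consPoint, ← Fin.succ_last]

@[simp] theorem consPoint_apply_momentum (ρ : ℝ) (m : Fin d → ℝ) (e : ℝ) (i : Fin d) :
    consPoint d ρ m e i.castSucc.succ = m i := by
  simp [consPoint]

theorem consPoint_eta (U : EuclideanSpace ℝ (Fin (d + 2))) :
    consPoint d (U 0) (fun i => U i.castSucc.succ) (U (Fin.last (d + 1))) = U := by
  ext j
  refine Fin.cases ?_ (fun k => Fin.lastCases ?_ (fun i => ?_) k) j
  · simp
  · simp [Fin.succ_last]
  · simp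

theorem inner_consPoint (ρ : ℝ) (m : Fin d → ℝ) (e : ℝ) (w : EuclideanSpace ℝ (Fin (d + 2))) :
    inner ℝ (consPoint d ρ m e) w =
      ρ * w 0 + ∑ i, m i * w i.castSucc.succ + e * w (Fin.last (d + 1)) := by
  rw [PiLp.inner_apply, Fin.sum_univ_succ, Fin.sum_univ_castSucc]
  simp [Fin.succ_last, mul_comm, add_assoc]

theorem smul_consPoint (c ρ : ℝ) (m : Fin d → ℝ) (e : ℝ) :
    c • consPoint d ρ m e = consPoint d (c * ρ) (c • m) (c * e) := by
  rw [← consPoint_eta (c • consPoint d ρ m e)]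
  simp only [PiLp.smul_apply, smul_eq_mul, consPoint_apply_zero, consPoint_apply_momentum,
    consPoint_apply_last]
  rfl

theorem consPoint_add_consPoint (ρ ρ' : ℝ) (m m' : Fin d → ℝ) (e e' : ℝ) :
    consPoint d ρ m e + consPoint d ρ' m' e' = consPoint d (ρ + ρ') (m + m') (e + e') := by
  rw [← consPoint_eta (consPoint d ρ m e + consPoint d ρ' m' e')]
  simp only [PiLp.add_apply, consPoint_apply_zero, consPoint_apply_momentum, consPoint_apply_last]
  rfl

theorem hartenW_eq_smul_consPoint (γ α ρ p : ℝ) (V : Fin d → ℝ) :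
    hartenW d γ α ρ p V = ((ρ / p) * (p * ρ ^ (-γ)) ^ (1 / (α + γ))) •
      consPoint d (-(α / (γ - 1)) * (p / ρ) - (∑ i, V i ^ 2) / 2) V (-1) := by
  ext j
  simp [hartenW, consPoint]

end ConsPoint

section CoordinateGradients

variable {d : ℕ}

theorem hasGradientAt_apply_zero (x : EuclideanSpace ℝ (Fin (d + 2))) :
    HasGradientAt (fun U : EuclideanSpace ℝ (Fin (d + 2)) => U 0) (consPoint d 1 0 0) x := by
  rw [hasGradientAt_iff_hasFDerivAt]
  refine (EuclideanSpace.proj (𝕜 := ℝ) (0 : Fin (d + 2))).hasFDerivAt.congr_fderiv ?_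
  ext w
  simp [inner_consPoint]

theorem hasGradientAt_pOf (γ : ℝ) {ρ : ℝ} (hρ : ρ ≠ 0) (m : Fin d → ℝ) (e : ℝ) :
    HasGradientAt (pOf d γ)
      ((γ - 1) • consPoint d ((∑ i, (m i / ρ) ^ 2) / 2) (fun i => -(m i / ρ)) 1)
      (consPoint d ρ m e) := by
  set x := consPoint d ρ m e
  have hproj (j : Fin (d + 2)) :
      HasFDerivAt (fun U : EuclideanSpace ℝ (Fin (d + 2)) => U j)
        (EuclideanSpace.proj (𝕜 := ℝ) j) x :=
    (EuclideanSpace.proj (𝕜 := ℝ) j).hasFDerivAt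
  have hsq := HasFDerivAt.fun_sum (u := Finset.univ)
    fun (i : Fin d) _ => (hproj i.castSucc.succ).pow 2
  have h2ρ : (fun U : EuclideanSpace ℝ (Fin (d + 2)) => 2 * U 0) x ≠ 0 := by simpa [x] using hρ
  have hkin := hsq.fun_mul ((hasDerivAt_inv h2ρ).comp_hasFDerivAt x ((hproj 0).const_mul 2))
  have hpOf : pOf d γ = fun U => (γ - 1) * (U (Fin.last (d + 1)) -
      (∑ i : Fin d, U i.castSucc.succ ^ 2) * (2 * U 0)⁻¹) := by
    ext U
    simp [pOf, div_eq_mul_inv]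
  rw [hasGradientAt_iff_hasFDerivAt, hpOf]
  refine (((hproj (Fin.last (d + 1))).fun_sub hkin).const_mul (γ - 1)).congr_fderiv ?_
  ext w
  simp only [x, toDual_apply_apply, inner_consPoint, map_smul, smul_eq_mul, smul_apply, sub_apply,
    add_apply, sum_apply, PiLp.proj_apply, Function.comp_apply, consPoint_apply_zero,
    consPoint_apply_momentum, nsmul_eq_mul, Nat.cast_ofNat, Nat.add_one_sub_one,
    pow_one, mul_inv_rev, neg_mul, one_mul, Finset.sum_neg_distrib]
  congr 1
  simp_rw [div_pow, div_mul_eq_mul_div, ← Finset.sum_div, mul_assoc (2 : ℝ), ← Finset.mul_sum]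
  field_simp
  ring

end CoordinateGradients

theorem hartenShat_hasGradientAt_general
    (d : ℕ) (γ α β : ℝ) (hγ : 1 < γ) (hα : 0 < α ∨ α < -γ)
    (hβ : β = -(γ + α) / (γ - 1))
    (ρ e : ℝ) (m : Fin d → ℝ) (hρ : 0 < ρ)
    (hp : 0 < (γ - 1) * (e - (∑ i, m i ^ 2) / (2 * ρ))) :
    HasGradientAt (hartenShat d γ α β)
      (hartenW d γ α ρ ((γ - 1) * (e - (∑ i, m i ^ 2) / (2 * ρ))) (fun i => m i / ρ))
      (consPoint d ρ m e) := by
  set p := (γ - 1) * (e - (∑ i, m i ^ 2) / (2 * ρ))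
  have hpOf : pOf d γ (consPoint d ρ m e) = p := by simp [pOf, p]
  have hαγ : α + γ ≠ 0 := by rcases hα with h | h <;> intro h' <;> linarith
  have hγ1 : γ - 1 ≠ 0 := by linarith
  have h : HasGradientAt (hartenShat d γ α β) _ _ :=
    (hasGradientAt_apply_zero (consPoint d ρ m e)).hartenS γ α β
      (hasGradientAt_pOf γ hρ.ne' m e) (by simpa) (by rwa [hpOf])
  convert h using 1
  rw [hpOf, consPoint_apply_zero, hartenW_eq_smul_consPoint]
  simp only [smul_consPoint, consPoint_add_consPoint]
  subst hβ
  congr 1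
  · simp only [hartenS]
    field_simp
    ring
  · ext i
    simp only [hartenS, Pi.add_apply, Pi.smul_apply, Pi.zero_apply, smul_eq_mul]
    field_simp
    ring
  · simp only [hartenS]
    field_simp
    ring

/-- Under the Harten setup, `Ŝ` is differentiable on
`D = {(ρ, m, e) : ρ > 0, (γ−1)(e − ‖m‖²/(2ρ)) > 0}` and its gradient at
`U = (ρ, m, e)` equals Harten's entropy variables `W` evaluated at the fluid state
`(ρ, V, p)` with `V = m/ρ` and `p = (γ−1)(e − ‖m‖²/(2ρ))`. -/
theorem hartenShat_hasGradientAt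
    (d : ℕ) (hd : 1 ≤ d) (γ α β : ℝ) (hγ : 1 < γ) (hα : 0 < α ∨ α < -γ)
    (hβ : β = -(γ + α) / (γ - 1))
    (ρ e : ℝ) (m : Fin d → ℝ) (hρ : 0 < ρ)
    (hp : 0 < (γ - 1) * (e - (∑ i, m i ^ 2) / (2 * ρ))) :
    HasGradientAt (hartenShat d γ α β)
      (hartenW d γ α ρ ((γ - 1) * (e - (∑ i, m i ^ 2) / (2 * ρ))) (fun i => m i / ρ))
      (consPoint d ρ m e) :=
  hartenShat_hasGradientAt_general d γ α β hγ hα hβ ρ e m hρ hp
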